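/- arXiv:1706.02612 — 7 statements merged into one kernel-verified Lean document; each statement's English description precedes it below -/
import Mathlib

section
/- The vector (1/4, 1/4, 1/4, 1/4) is the unique maximizer of the function f(x1,x2,x3,x4) = 12·(x1·x2 + x3·x4)·(x1 + x2)·(x3 + x4) over the simplex {x ∈ ℝ^4 : x ≥ 0, x1 + x2 + x3 + x4 = 1}. -/
lemma key_ineq (y1 y2 y3 y4 : ℝ) (h1 : 0 ≤ y1) (h2 : 0 ≤ y2) (h3 : 0 ≤ y3) (h4 : 0 ≤ y4)
    (hsum : y1 + y2 + y3 + y4 = 1) :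
    12 * (y1 * y2 + y3 * y4) * (y1 + y2) * (y3 + y4) ≤ 3/8 := by
  obtain rfl : y4 = 1 - y1 - y2 - y3 := by linarith
  nlinarith [sq_nonneg ((y1+y2)*(1-y1-y2) - 1/4),
    mul_nonneg (mul_nonneg (add_nonneg h1 h2) (add_nonneg h3 h4)) (sq_nonneg (y1-y2)),
    mul_nonneg (mul_nonneg (add_nonneg h1 h2) (add_nonneg h3 h4))
      (sq_nonneg (y3-(1-y1-y2-y3))),
    sq_nonneg (y1-y2), sq_nonneg (y3-(1-y1-y2-y3))]

theorem stmt_1 :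
    (∀ y1 y2 y3 y4 : ℝ, 0 ≤ y1 → 0 ≤ y2 → 0 ≤ y3 → 0 ≤ y4 →
      y1 + y2 + y3 + y4 = 1 →
      12 * (y1 * y2 + y3 * y4) * (y1 + y2) * (y3 + y4) ≤
        12 * ((1/4 : ℝ) * (1/4) + (1/4) * (1/4)) * ((1/4 : ℝ) + 1/4) * ((1/4 : ℝ) + 1/4)) ∧
    (∀ x1 x2 x3 x4 : ℝ, 0 ≤ x1 → 0 ≤ x2 → 0 ≤ x3 → 0 ≤ x4 →
      x1 + x2 + x3 + x4 = 1 →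
      (∀ y1 y2 y3 y4 : ℝ, 0 ≤ y1 → 0 ≤ y2 → 0 ≤ y3 → 0 ≤ y4 →
        y1 + y2 + y3 + y4 = 1 →
        12 * (y1 * y2 + y3 * y4) * (y1 + y2) * (y3 + y4) ≤
          12 * (x1 * x2 + x3 * x4) * (x1 + x2) * (x3 + x4)) →
      x1 = 1/4 ∧ x2 = 1/4 ∧ x3 = 1/4 ∧ x4 = 1/4) := by
  constructor
  · intro y1 y2 y3 y4 h1 h2 h3 h4 hsum
    have := key_ineq y1 y2 y3 y4 h1 h2 h3 h4 hsum
    linarith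
  · intro x1 x2 x3 x4 h1 h2 h3 h4 hsum hmax
    have hge : (3/8 : ℝ) ≤ 12 * (x1 * x2 + x3 * x4) * (x1 + x2) * (x3 + x4) := by
      have := hmax (1/4) (1/4) (1/4) (1/4) (by norm_num) (by norm_num) (by norm_num)
        (by norm_num) (by norm_num)
      linarith
    have heq : 12 * (x1 * x2 + x3 * x4) * (x1 + x2) * (x3 + x4) = 3/8 :=
      le_antisymm (key_ineq x1 x2 x3 x4 h1 h2 h3 h4 hsum) hge
    obtain rfl : x4 = 1 - x1 - x2 - x3 := by linarith
    have hst0 : ((x1+x2)*(1-x1-x2) - 1/4)^2 ≤ 0 := by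
      nlinarith [mul_nonneg (mul_nonneg (add_nonneg h1 h2) (add_nonneg h3 h4)) (sq_nonneg (x1-x2)),
        mul_nonneg (mul_nonneg (add_nonneg h1 h2) (add_nonneg h3 h4))
          (sq_nonneg (x3-(1-x1-x2-x3)))]
    have hst : (x1+x2)*(1-x1-x2) = 1/4 := by
      have h0 := le_antisymm hst0 (sq_nonneg _)
      have := pow_eq_zero_iff (n := 2) (by norm_num) |>.mp h0
      linarith [sub_eq_zero.mp this]
    have hs : x1 + x2 = 1/2 := by
      have h : (x1 + x2 - 1/2)^2 = 0 := by linear_combination (-1) * hst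
      have := pow_eq_zero_iff (n := 2) (by norm_num) |>.mp h
      linarith
    have h12 : (x1 - x2)^2 ≤ 0 := by nlinarith [sq_nonneg (x3-(1-x1-x2-x3))]
    have h34 : (x3 - (1-x1-x2-x3))^2 ≤ 0 := by nlinarith [sq_nonneg (x1-x2)]
    have e12 := pow_eq_zero_iff (n := 2) (by norm_num) |>.mp (le_antisymm h12 (sq_nonneg _))
    have e34 := pow_eq_zero_iff (n := 2) (by norm_num) |>.mp (le_antisymm h34 (sq_nonneg _))
    refine ⟨by linarith, by linarith, by linarith, by linarith⟩
end

section
/- The maximum of f(x1,x2) = 12·x1·x2·(x1 + x2)·(1 − x1 − x2) over the region D = {(x1,x2) : x1 ≥ 0, x2 ≥ 0, x1 + x2 ≤ 1} equals 81/256, attained at x1 = x2 = 3/8; in particular this maximum is strictly less than 3/8. -/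
theorem stmt_2 :
    (∀ x1 x2 : ℝ, 0 ≤ x1 → 0 ≤ x2 → x1 + x2 ≤ 1 →
      12 * x1 * x2 * (x1 + x2) * (1 - x1 - x2) ≤ 81 / 256) ∧
    12 * (3/8 : ℝ) * (3/8) * ((3/8 : ℝ) + 3/8) * (1 - 3/8 - 3/8) = 81 / 256 ∧
    (81 / 256 : ℝ) < 3 / 8 := by
  refine ⟨?_, by norm_num, by norm_num⟩
  intro x1 x2 h1 h2 h3
  nlinarith [sq_nonneg (x1 - x2), sq_nonneg (x1 + x2 - 3/4), mul_nonneg h1 h2,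
    mul_nonneg (mul_nonneg h1 h2) (sq_nonneg (x1 + x2 - 3/4)),
    mul_nonneg (sq_nonneg (x1 - x2)) (sub_nonneg.2 h3),
    mul_nonneg (mul_nonneg h1 h2) (sub_nonneg.2 h3),
    sq_nonneg (x1 + x2), mul_nonneg (sq_nonneg (x1 - x2)) (add_nonneg h1 h2)]
end

section
/- The polynomial p(x) = 12(x − 1/2)^6 − 217(x − 1/2)^4 + 24(x − 1/2)^2 attains its maximum on [0,1] at the two points x0 = (3 − √2)/6 and 1 − x0, and at no other points; in particular the maximum on [0,1] is not attained at x = 1/2. -/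
theorem stmt_3 :
    let p : ℝ → ℝ := fun x => 12 * (x - 1/2)^6 - 217 * (x - 1/2)^4 + 24 * (x - 1/2)^2
    let x0 : ℝ := (3 - Real.sqrt 2) / 6
    (∀ x ∈ Set.Icc (0:ℝ) 1, p x ≤ p x0) ∧
    p (1 - x0) = p x0 ∧
    (∀ x ∈ Set.Icc (0:ℝ) 1, p x = p x0 → x = x0 ∨ x = 1 - x0) ∧
    p (1/2) < p x0 := by
  intro p x0
  have hs : Real.sqrt 2 ^ 2 = 2 := Real.sq_sqrt (by norm_num)
  have hsp : (0:ℝ) < Real.sqrt 2 := Real.sqrt_pos.mpr (by norm_num)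
  have hval : p x0 = 647/972 := by
    show 12 * ((3 - Real.sqrt 2)/6 - 1/2)^6 - 217 * ((3 - Real.sqrt 2)/6 - 1/2)^4
        + 24 * ((3 - Real.sqrt 2)/6 - 1/2)^2 = 647/972
    have h2 : ((3 - Real.sqrt 2)/6 - 1/2) ^ 2 = 1/18 := by nlinarith [hs]
    have h6 : ((3 - Real.sqrt 2)/6 - 1/2)^6 = ((1:ℝ)/18)^3 := by
      calc ((3 - Real.sqrt 2)/6 - 1/2)^6 = (((3 - Real.sqrt 2)/6 - 1/2)^2)^3 := by ring
        _ = ((1:ℝ)/18)^3 := by rw [h2]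
    have h4 : ((3 - Real.sqrt 2)/6 - 1/2)^4 = ((1:ℝ)/18)^2 := by
      calc ((3 - Real.sqrt 2)/6 - 1/2)^4 = (((3 - Real.sqrt 2)/6 - 1/2)^2)^2 := by ring
        _ = ((1:ℝ)/18)^2 := by rw [h2]
    rw [h6, h4, h2]; norm_num
  have key : ∀ x : ℝ, p x - 647/972
      = ((x - 1/2)^2 - 1/18)^2 * (12*(x - 1/2)^2 - 647/3) := by
    intro x; show 12 * (x - 1/2)^6 - 217 * (x - 1/2)^4 + 24 * (x - 1/2)^2 - 647/972 = _
    ring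
  have hle : ∀ x ∈ Set.Icc (0:ℝ) 1, p x ≤ p x0 := by
    rintro x ⟨hx0, hx1⟩
    rw [hval]
    have hneg : 12*(x - 1/2)^2 - 647/3 ≤ 0 := by nlinarith
    have hprod := mul_nonpos_of_nonneg_of_nonpos (sq_nonneg ((x - 1/2)^2 - 1/18)) hneg
    linarith [key x]
  refine ⟨hle, ?_, ?_, ?_⟩
  · show 12 * ((1 - (3 - Real.sqrt 2)/6) - 1/2)^6 - 217 * ((1 - (3 - Real.sqrt 2)/6) - 1/2)^4
        + 24 * ((1 - (3 - Real.sqrt 2)/6) - 1/2)^2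
      = 12 * ((3 - Real.sqrt 2)/6 - 1/2)^6 - 217 * ((3 - Real.sqrt 2)/6 - 1/2)^4
        + 24 * ((3 - Real.sqrt 2)/6 - 1/2)^2
    ring
  · rintro x ⟨hx0, hx1⟩ hpx
    rw [hval] at hpx
    have h1 : ((x - 1/2)^2 - 1/18)^2 * (12*(x - 1/2)^2 - 647/3) = 0 := by
      rw [← key x, hpx]; ring
    have h2 : 12*(x - 1/2)^2 - 647/3 < 0 := by nlinarith [sq_nonneg (x - 1/2)]
    have h3 : ((x - 1/2)^2 - 1/18)^2 = 0 := by
      rcases mul_eq_zero.mp h1 with h | h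
      · exact h
      · linarith
    have h4 : (x - 1/2)^2 = 1/18 := by
      have := pow_eq_zero_iff (n := 2) (by norm_num) |>.mp h3
      linarith
    have h5 : (x - (1/2 - Real.sqrt 2/6)) * (x - (1/2 + Real.sqrt 2/6)) = 0 := by
      nlinarith [h4, hs]
    rcases mul_eq_zero.mp h5 with h | h
    · left; show x = (3 - Real.sqrt 2)/6; linarith [sub_eq_zero.mp h]
    · right; show x = 1 - (3 - Real.sqrt 2)/6; linarith [sub_eq_zero.mp h]
  · rw [hval]; show 12 * ((1:ℝ)/2 - 1/2)^6 - 217 * ((1:ℝ)/2 - 1/2)^4 + 24 * ((1:ℝ)/2 - 1/2)^2 < 647/972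
    norm_num
end

section
/- Let G be a nonempty class of finite simple graphs closed under taking induced subgraphs and closed under blow-ups (replacing a vertex by an independent set of clones), containing graphs of every order ≥ κ, and let λ(n, G) be defined as the maximum over G ∈ G of order n of the average of γ(G[X]) over κ-subsets X. Then there is a constant c (depending on κ and γ) such that for all κ ≤ q ≤ n we have λ(q, G) − λ(n, G) ≤ c/q. -/
/-!
Averaging over embeddings shows that `λ` is non-increasing in the order: a uniformly random
`κ`-subset of an `N`-vertex graph is a uniformly random `κ`-subset of a uniformly random `n`-subset,
so some `n`-vertex induced subgraph is at least as good as the whole graph.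

In the other direction, blow up an extremal `q`-vertex graph `G` by a factor `n`. Sampling `κ`
vertices *with* replacement gives a mean that is exactly invariant under blow-ups, and it differs
from sampling without replacement by at most `2 max |γ|` times the collision probability, which is
at most `κ² / |V|`. Hence the blow-up has density at least `λ(q) - 4 max |γ| κ² / q`, and its best
`n`-vertex induced subgraph witnesses `λ(q) - λ(n) ≤ 4 max |γ| κ² / q`.
-/

open Finset Function MulAction
open scoped BigOperators

section Fibers

variable {G X Y : Type*} [Group G] [MulAction G X] [MulAction G Y] [IsPretransitive G Y]
  [Fintype X]

lemma card_filter_eq_of_pretransitive [DecidableEq Y] (f : X →[G] Y) (y y' : Y) :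
    #{x | f x = y} = #{x | f x = y'} := by
  obtain ⟨g, rfl⟩ := exists_smul_eq G y y'
  refine card_bij' (fun x _ => g • x) (fun x _ => g⁻¹ • x) ?_ ?_ ?_ ?_ <;>
    simp_all

lemma expect_comp_of_pretransitive {K : Type*} [Semifield K] [CharZero K] [Fintype Y]
    [Nonempty X] (f : X →[G] Y) (F : Y → K) :
    𝔼 x, F (f x) = 𝔼 y, F y := by
  classical
  obtain ⟨x₀⟩ := ‹Nonempty X›
  set c := #{x | f x = f x₀}
  have hfiber (y : Y) : #{x | f x = y} = c := card_filter_eq_of_pretransitive f y (f x₀)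
  have hc : c ≠ 0 := card_ne_zero.2 ⟨x₀, by simp⟩
  have hsum : ∑ x, F (f x) = c * ∑ y, F y := by
    rw [← sum_fiberwise univ f, mul_sum]
    refine sum_congr rfl fun y _ => ?_
    rw [sum_congr rfl fun x hx => by rw [(mem_filter.1 hx).2], sum_const, hfiber, nsmul_eq_mul]
  have hcard : Fintype.card X = c * Fintype.card Y := by
    rw [← card_univ, card_eq_sum_card_fiberwise (f := f) (t := univ) (by simp)]
    simp [hfiber, mul_comm]
  rw [Fintype.expect_eq_sum_div_card, Fintype.expect_eq_sum_div_card, hsum, hcard]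
  push_cast
  rw [mul_div_mul_left _ _ (Nat.cast_ne_zero.2 hc)]

end Fibers

lemma Function.Embedding.expect_trans_eq {W U V K : Type*} [Fintype W] [Fintype U] [Fintype V]
    [Semifield K] [CharZero K]
    (e : W ↪ U) (hUV : Fintype.card U ≤ Fintype.card V) (F : (W ↪ V) → K) :
    𝔼 h : U ↪ V, F (e.trans h) = 𝔼 j : W ↪ V, F j := by
  have : Nonempty (U ↪ V) := Function.Embedding.nonempty_of_card_le hUV
  have : IsPretransitive (Equiv.Perm V) (W ↪ V) := ⟨Equiv.Perm.exists_smul_eq_embedding⟩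
  exact expect_comp_of_pretransitive (G := Equiv.Perm V)
    ⟨e.trans, fun _ _ => Function.Embedding.ext fun _ => rfl⟩ F

lemma abs_expect_sub_expect_le_of_subset {ι : Type*} {s t : Finset ι} (hst : s ⊆ t) {f : ι → ℝ}
    {M : ℝ} (hM : 0 ≤ M) (hf : ∀ i ∈ t, |f i| ≤ M) :
    |𝔼 i ∈ t, f i - 𝔼 i ∈ s, f i| ≤ 2 * M * (1 - #s / #t) := by
  classical
  rcases t.eq_empty_or_nonempty with rfl | ht
  · simp [subset_empty.1 hst, hM]
  set c := 𝔼 i ∈ s, f i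
  have hc : |c| ≤ M := by
    rcases s.eq_empty_or_nonempty with rfl | hs
    · simp [c, hM]
    · exact (abs_expect_le _ _).trans (expect_le hs fun i hi => hf i (hst hi))
  have hcentred : ∑ i ∈ s, (f i - c) = 0 := by
    rw [sum_sub_distrib, sum_const, ← card_smul_expect, sub_self]
  have hdev : 𝔼 i ∈ t, f i - c = (∑ i ∈ t \ s, (f i - c)) / #t := by
    rw [← expect_const ht c, ← expect_sub_distrib, expect_eq_sum_div_card, ← sum_sdiff hst,
      hcentred, add_zero, expect_const ht]
  have hbound : |∑ i ∈ t \ s, (f i - c)| ≤ #(t \ s) * (2 * M) := by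
    refine (abs_sum_le_sum_abs _ _).trans <| (sum_le_card_nsmul _ _ _ fun i hi => ?_).trans_eq
      (nsmul_eq_mul _ _)
    have := hf i (sdiff_subset hi)
    exact (abs_sub _ _).trans (by linarith)
  have ht' : (0 : ℝ) < #t := by exact_mod_cast ht.card_pos
  rw [hdev, abs_div, Nat.abs_cast, div_le_iff₀ ht']
  calc _ ≤ _ := hbound
    _ = 2 * M * (1 - #s / #t) * #t := by
      rw [card_sdiff_of_subset hst, Nat.cast_sub (card_le_card hst)]
      field_simp

lemma Nat.one_sub_descFactorial_div_pow_le {n k : ℕ} (hk : k ≤ n) :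
    1 - (n.descFactorial k : ℝ) / n ^ k ≤ k ^ 2 / n := by
  rcases n.eq_zero_or_pos with rfl | hn
  · simp [Nat.le_zero.1 hk]
  have hn' : (0 : ℝ) < n := by exact_mod_cast hn
  have hbern : 1 + k * ((1 - k) / n) ≤ (1 + (1 - k) / n : ℝ) ^ k := by
    refine one_add_mul_le_pow ?_ k
    rw [le_div_iff₀ hn']
    have : (k : ℝ) ≤ n := by exact_mod_cast hk
    linarith
  have hpow : ((n + 1 - k : ℕ) : ℝ) ^ k ≤ n.descFactorial k := by
    exact_mod_cast Nat.pow_sub_le_descFactorial n k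
  have hcast : ((n + 1 - k : ℕ) : ℝ) = n * (1 + (1 - k) / n) := by
    rw [Nat.cast_sub (by omega)]; field_simp; push_cast; ring
  rw [hcast, mul_pow, ← le_div_iff₀' (by positivity)] at hpow
  have : (k : ℝ) * ((1 - k) / n) = k / n - k ^ 2 / n := by ring
  have : 0 ≤ (k : ℝ) / n := by positivity
  linarith

namespace SimpleGraph

variable {κ : ℕ} (γ : SimpleGraph (Fin κ) → ℝ) {U V W : Type*}
  [Fintype U] [Fintype V] [Fintype W]

noncomputable def inducedMean (G : SimpleGraph V) : ℝ := 𝔼 f : Fin κ ↪ V, γ (G.comap f)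

noncomputable def mapMean (G : SimpleGraph V) : ℝ := 𝔼 f : Fin κ → V, γ (G.comap f)

lemma inducedMean_comap_equiv (e : W ≃ V) (G : SimpleGraph V) :
    inducedMean γ (G.comap e) = inducedMean γ G :=
  Fintype.expect_equiv (Equiv.embeddingCongr (Equiv.refl _) e) _ _ fun _ => rfl

lemma inducedMean_eq_expect_inducedMean_comap (G : SimpleGraph V) (hκU : κ ≤ Fintype.card U)
    (hUV : Fintype.card U ≤ Fintype.card V) :
    inducedMean γ G = 𝔼 h : U ↪ V, inducedMean γ (G.comap h) := by
  have : Nonempty (Fin κ ↪ U) := Function.Embedding.nonempty_of_card_le (by simpa using hκU)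
  calc inducedMean γ G = 𝔼 _e : Fin κ ↪ U, inducedMean γ G := (Fintype.expect_const _).symm
    _ = 𝔼 e : Fin κ ↪ U, 𝔼 h : U ↪ V, γ (G.comap (e.trans h)) :=
      expect_congr rfl fun e _ => (e.expect_trans_eq hUV fun j => γ (G.comap j)).symm
    _ = 𝔼 h : U ↪ V, inducedMean γ (G.comap h) := Finset.expect_comm ..

lemma exists_inducedMean_le_inducedMean_comap (G : SimpleGraph V) (hκU : κ ≤ Fintype.card U)
    (hUV : Fintype.card U ≤ Fintype.card V) :
    ∃ h : U ↪ V, inducedMean γ G ≤ inducedMean γ (G.comap h) := by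
  have : Nonempty (U ↪ V) := Function.Embedding.nonempty_of_card_le hUV
  obtain ⟨h, -, hh⟩ := Finset.exists_le_of_le_expect univ_nonempty
    (inducedMean_eq_expect_inducedMean_comap γ G hκU hUV).le
  exact ⟨h, hh⟩

lemma mapMean_comap_fst (A : Type*) [Fintype A] [Nonempty A] (G : SimpleGraph V) :
    mapMean γ (G.comap (Prod.fst : V × A → V)) = mapMean γ G := by
  calc mapMean γ (G.comap (Prod.fst : V × A → V))
      = 𝔼 pt : (Fin κ → V) × (Fin κ → A), γ (G.comap pt.1) :=
        Fintype.expect_equiv (Equiv.arrowProdEquivProdArrow _ _ _) _ _ fun _ => rfl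
    _ = 𝔼 p : Fin κ → V, 𝔼 _t : Fin κ → A, γ (G.comap p) :=
        Finset.expect_product' univ univ fun p _ => γ (G.comap p)
    _ = mapMean γ G := by simp only [Fintype.expect_const]; rfl

lemma abs_mapMean_sub_inducedMean_le {M : ℝ} (hM : ∀ H, |γ H| ≤ M) (G : SimpleGraph V)
    (hκ : κ ≤ Fintype.card V) :
    |mapMean γ G - inducedMean γ G| ≤ 2 * M * (κ ^ 2 / Fintype.card V) := by
  classical
  have hM₀ : 0 ≤ M := (abs_nonneg _).trans (hM ⊥)
  set injective : Finset (Fin κ → V) := univ.image fun f : Fin κ ↪ V => ⇑f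
  have hinduced : inducedMean γ G = 𝔼 f ∈ injective, γ (G.comap f) :=
    (expect_image (f := fun f => γ (G.comap f)) (t := univ)
      (Embedding.coe_injective (α := Fin κ) (β := V)).injOn).symm
  have hcard : (#injective : ℝ) / #(univ : Finset (Fin κ → V))
      = (Fintype.card V).descFactorial κ / Fintype.card V ^ κ := by
    rw [card_image_of_injective _ (Embedding.coe_injective (α := Fin κ) (β := V)), card_univ,
      card_univ, Fintype.card_embedding_eq, Fintype.card_fun]
    simp
  calc |mapMean γ G - inducedMean γ G|
      ≤ 2 * M * (1 - (Fintype.card V).descFactorial κ / Fintype.card V ^ κ) := by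
        rw [mapMean, hinduced, ← hcard]
        exact abs_expect_sub_expect_le_of_subset (subset_univ _) hM₀ fun f _ => hM _
    _ ≤ 2 * M * (κ ^ 2 / Fintype.card V) := by
        gcongr
        exact Nat.one_sub_descFactorial_div_pow_le hκ

lemma inducedMean_sub_le_inducedMean_comap_fst (A : Type*) [Fintype A] [Nonempty A] [Nonempty V]
    {M : ℝ} (hM : ∀ H, |γ H| ≤ M) (G : SimpleGraph V) (hκ : κ ≤ Fintype.card V) :
    inducedMean γ G - 4 * M * κ ^ 2 / Fintype.card V
      ≤ inducedMean γ (G.comap (Prod.fst : V × A → V)) := by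
  have hM₀ : 0 ≤ M := (abs_nonneg _).trans (hM ⊥)
  have hVA : Fintype.card V ≤ Fintype.card (V × A) := by
    rw [Fintype.card_prod]; exact Nat.le_mul_of_pos_right _ Fintype.card_pos
  have hG := abs_le.1 (abs_mapMean_sub_inducedMean_le γ hM G hκ)
  have hblowup := abs_le.1 (abs_mapMean_sub_inducedMean_le γ hM (G.comap Prod.fst) (hκ.trans hVA))
  rw [mapMean_comap_fst] at hblowup
  have hcard : 2 * M * (κ ^ 2 / Fintype.card (V × A)) ≤ 2 * M * (κ ^ 2 / Fintype.card V) := by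
    gcongr
  have : 4 * M * κ ^ 2 / Fintype.card V = 2 * (2 * M * (κ ^ 2 / Fintype.card V)) := by ring
  linarith [hG.1, hblowup.2]

end SimpleGraph

open SimpleGraph

theorem stmt_5_general (κ : ℕ) (hκ : 1 ≤ κ)
    (𝒢 : ∀ n : ℕ, Set (SimpleGraph (Fin n)))
    (hclosed : ∀ m n : ℕ, ∀ G ∈ 𝒢 n, ∀ f : Fin m ↪ Fin n, G.comap ⇑f ∈ 𝒢 m)
    (hblow : ∀ m n : ℕ, ∀ G ∈ 𝒢 n, ∀ f : Fin m → Fin n, G.comap f ∈ 𝒢 m)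
    (γ : SimpleGraph (Fin κ) → ℝ)
    (lam : ∀ n : ℕ, SimpleGraph (Fin n) → ℝ)
    (hlam : ∀ (n : ℕ) (G : SimpleGraph (Fin n)),
      lam n G = (∑ f : Fin κ ↪ Fin n, γ (G.comap ⇑f)) / (Fintype.card (Fin κ ↪ Fin n))) :
    ∃ c : ℝ, ∀ q n : ℕ, κ ≤ q → q ≤ n →
      ∀ Lq Ln : ℝ, IsGreatest (lam q '' 𝒢 q) Lq → IsGreatest (lam n '' 𝒢 n) Ln →
        Lq - Ln ≤ c / q := by
  obtain ⟨M, hM⟩ := Finite.exists_le fun H : SimpleGraph (Fin κ) => |γ H|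
  have hlam_eq : lam = fun _ G => inducedMean γ G := by
    ext n G
    rw [hlam, inducedMean, Fintype.expect_eq_sum_div_card]
  subst hlam_eq
  refine ⟨4 * M * κ ^ 2, fun q n hκq hqn Lq Ln hLq hLn => ?_⟩
  obtain ⟨G, hG, rfl⟩ := hLq.1
  have : Nonempty (Fin q) := ⟨⟨0, by omega⟩⟩
  have : Nonempty (Fin n) := ⟨⟨0, by omega⟩⟩
  set π : Fin (q * n) → Fin q := Prod.fst ∘ finProdFinEquiv.symm
  have hblowup : inducedMean γ G - 4 * M * κ ^ 2 / q ≤ inducedMean γ (G.comap π) := by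
    have := inducedMean_sub_le_inducedMean_comap_fst γ (Fin n) hM G (by simpa using hκq)
    rwa [← inducedMean_comap_equiv γ finProdFinEquiv.symm, Fintype.card_fin] at this
  obtain ⟨h, hh⟩ := exists_inducedMean_le_inducedMean_comap γ (G.comap π) (U := Fin n)
    (by simpa using hκq.trans hqn) (by simpa using Nat.le_mul_of_pos_left n (by omega))
  have hLn' := hLn.2 ⟨_, hclosed _ _ _ (hblow _ _ G hG π) h, rfl⟩
  linarith

theorem stmt_5 (κ : ℕ) (hκ : 1 ≤ κ)
    (𝒢 : ∀ n : ℕ, Set (SimpleGraph (Fin n)))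
    (hclosed : ∀ m n : ℕ, ∀ G ∈ 𝒢 n, ∀ f : Fin m ↪ Fin n, G.comap ⇑f ∈ 𝒢 m)
    (hblow : ∀ m n : ℕ, ∀ G ∈ 𝒢 n, ∀ f : Fin m → Fin n, G.comap f ∈ 𝒢 m)
    (hne : ∀ n : ℕ, κ ≤ n → (𝒢 n).Nonempty)
    (γ : SimpleGraph (Fin κ) → ℝ)
    (hγ : ∀ H₁ H₂ : SimpleGraph (Fin κ), Nonempty (H₁ ≃g H₂) → γ H₁ = γ H₂)
    (lam : ∀ n : ℕ, SimpleGraph (Fin n) → ℝ)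
    (hlam : ∀ (n : ℕ) (G : SimpleGraph (Fin n)),
      lam n G = (∑ f : Fin κ ↪ Fin n, γ (G.comap ⇑f)) / (Fintype.card (Fin κ ↪ Fin n))) :
    ∃ c : ℝ, ∀ q n : ℕ, κ ≤ q → q ≤ n →
      ∀ Lq Ln : ℝ, IsGreatest (lam q '' 𝒢 q) Lq → IsGreatest (lam n '' 𝒢 n) Ln →
        Lq - Ln ≤ c / q :=
  stmt_5_general κ hκ 𝒢 hclosed hblow γ lam hlam
end

section
/- Let 0 < θ < ε be reals and let ℓ1 < ℓ2 be positive integers. Then there exists a positive integer ℓ3 with the following property: for every probability space (Ω, Σ, μ) and every sequence A_1, …, A_{ℓ3} of measurable sets with μ(A_j) ≥ ε for all j, there exists a subset L of {1,…,ℓ3} of cardinality ℓ2 such that for every subset K of L of cardinality ℓ1 we have μ(⋂_{j∈K} A_j) ≥ θ^{ℓ1}. -/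
/-!
Colour each `ℓ1`-set `K` of indices by whether `μ (⋂ j ∈ K, A j) ≥ θ ^ ℓ1`. By the hypergraph
Ramsey theorem, enough indices contain either an `ℓ2`-set whose `ℓ1`-subsets are all good, or an
`m`-set whose `ℓ1`-subsets are all bad, and the latter is impossible once `ℓ1 < (ε - θ) m`.

Indeed, let `N x` count the events containing `x`. Then `∑_{#K = k} μ (⋂_K A) = 𝔼 (N.choose k)`,
and `k! * N.choose k ≥ max (N - k + 1) 0 ^ k`, a convex function of `N`. Jensen's inequality with
`𝔼 N ≥ ε m` gives
`k! * ∑_{#K = k} μ (⋂_K A) ≥ (ε m - k + 1) ^ k ≥ (θ m) ^ k ≥ k! * θ ^ k * m.choose k`.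
-/

open MeasureTheory Finset

universe u

/-- The arrow relation `n → (s, t)^r`. -/
def RamseyArrow (n r s t : ℕ) : Prop :=
  ∀ {α : Type u} (V : Finset α) (c : Finset α → Prop), n ≤ #V →
    ∃ L ⊆ V, (#L = s ∧ ∀ K ⊆ L, #K = r → c K) ∨ (#L = t ∧ ∀ K ⊆ L, #K = r → ¬ c K)

theorem forall_subset_insert_card_succ {α : Type*} [DecidableEq α] {P : Finset α → Prop}
    {v : α} {L : Finset α} {r : ℕ} (hlink : ∀ K ⊆ L, #K = r → P (insert v K))
    (hL : ∀ K ⊆ L, #K = r + 1 → P K) : ∀ K ⊆ insert v L, #K = r + 1 → P K := by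
  intro K hK hKr
  by_cases hvK : v ∈ K
  · rw [← insert_erase hvK]
    refine hlink _ ((erase_subset_erase v hK).trans (erase_insert_subset v L)) ?_
    rw [card_erase_of_mem hvK, hKr, Nat.add_sub_cancel]
  · exact hL K ((subset_insert_iff_of_notMem hvK).mp hK) hKr

namespace RamseyArrow

variable {n r s t : ℕ}

theorem symm (h : RamseyArrow.{u} n r s t) : RamseyArrow.{u} n r t s := by
  intro α V c hV
  obtain ⟨L, hLV, hL | hL⟩ := h V (fun K => ¬ c K) hV
  · exact ⟨L, hLV, Or.inr hL⟩
  · exact ⟨L, hLV, Or.inl ⟨hL.1, fun K hK hKr => not_not.mp (hL.2 K hK hKr)⟩⟩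

theorem of_lt (h : s < r) : RamseyArrow.{u} s r s t := by
  intro α V c hV
  obtain ⟨L, hLV, hLs⟩ := exists_subset_card_eq hV
  refine ⟨L, hLV, Or.inl ⟨hLs, fun K hK hKr => ?_⟩⟩
  have := card_le_card hK
  omega

theorem zero : RamseyArrow.{u} (max s t) 0 s t := by
  intro α V c hV
  by_cases hc : c ∅
  · obtain ⟨L, hLV, hLs⟩ := exists_subset_card_eq ((le_max_left s t).trans hV)
    exact ⟨L, hLV, Or.inl ⟨hLs, fun K _ hK => by rwa [card_eq_zero.mp hK]⟩⟩
  · obtain ⟨L, hLV, hLt⟩ := exists_subset_card_eq ((le_max_right s t).trans hV)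
    exact ⟨L, hLV, Or.inr ⟨hLt, fun K _ hK => by rwa [card_eq_zero.mp hK]⟩⟩

/-- Colour the `r`-sets `K` avoiding a fixed vertex `v` by the colour of `insert v K`, and extend
a homogeneous set for this link colouring by `v`. -/
theorem succ {n₁ n₂ : ℕ} (h₁ : RamseyArrow.{u} n₁ (r + 1) s (t + 1))
    (h₂ : RamseyArrow.{u} n₂ (r + 1) (s + 1) t) (h : RamseyArrow.{u} n r n₁ n₂) :
    RamseyArrow.{u} (n + 1) (r + 1) (s + 1) (t + 1) := by
  classical
  intro α V c hV
  obtain ⟨v, hv⟩ : V.Nonempty := card_pos.mp (by omega)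
  obtain ⟨W, hWV, hW⟩ :=
    h (V.erase v) (fun K => c (insert v K)) (by rw [card_erase_of_mem hv]; omega)
  have hvW : v ∉ W := fun hvW => notMem_erase v V (hWV hvW)
  have hWV' : W ⊆ V := hWV.trans (erase_subset v V)
  rcases hW with ⟨hWcard, hWc⟩ | ⟨hWcard, hWc⟩
  · obtain ⟨L, hLW, ⟨hLs, hLc⟩ | hL⟩ := h₁ W c hWcard.ge
    · refine ⟨insert v L, insert_subset hv (hLW.trans hWV'), Or.inl ⟨?_, ?_⟩⟩
      · rw [card_insert_of_notMem (fun hvL => hvW (hLW hvL)), hLs]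
      · exact forall_subset_insert_card_succ (fun K hK => hWc K (hK.trans hLW)) hLc
    · exact ⟨L, hLW.trans hWV', Or.inr hL⟩
  · obtain ⟨L, hLW, hL | ⟨hLt, hLc⟩⟩ := h₂ W c hWcard.ge
    · exact ⟨L, hLW.trans hWV', Or.inl hL⟩
    · refine ⟨insert v L, insert_subset hv (hLW.trans hWV'), Or.inr ⟨?_, ?_⟩⟩
      · rw [card_insert_of_notMem (fun hvL => hvW (hLW hvL)), hLt]
      · exact forall_subset_insert_card_succ (P := fun K => ¬ c K)
          (fun K hK => hWc K (hK.trans hLW)) hLc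

end RamseyArrow

theorem exists_ramseyArrow (r s t : ℕ) : ∃ n, RamseyArrow.{u} n r s t := by
  induction r generalizing s t with
  | zero => exact ⟨_, RamseyArrow.zero⟩
  | succ r ihr =>
    induction s generalizing t with
    | zero => exact ⟨0, RamseyArrow.of_lt r.succ_pos⟩
    | succ s ihs =>
      induction t with
      | zero => exact ⟨0, RamseyArrow.symm (RamseyArrow.of_lt r.succ_pos)⟩
      | succ t iht =>
        obtain ⟨n₁, h₁⟩ := ihs (t + 1)
        obtain ⟨n₂, h₂⟩ := iht
        obtain ⟨n, h⟩ := ihr n₁ n₂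
        exact ⟨n + 1, RamseyArrow.succ h₁ h₂ h⟩

section CoverCount

open Classical in
noncomputable def coverCount {Ω ι : Type*} (A : ι → Set Ω) (M : Finset ι) (x : Ω) : ℕ :=
  #{j ∈ M | x ∈ A j}

variable {Ω ι : Type*} (A : ι → Set Ω) (M : Finset ι)

theorem sum_indicator_one_eq_coverCount (x : Ω) :
    ∑ j ∈ M, (A j).indicator (1 : Ω → ℝ) x = coverCount A M x := by
  classical
  simp only [coverCount, Set.indicator_apply, Pi.one_apply, sum_boole]

theorem sum_indicator_one_biInter_eq_choose_coverCount (k : ℕ) (x : Ω) :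
    ∑ K ∈ M.powersetCard k, (⋂ j ∈ K, A j).indicator (1 : Ω → ℝ) x =
      (coverCount A M x).choose k := by
  classical
  have hfilter : {K ∈ M.powersetCard k | ∀ j ∈ K, x ∈ A j} =
      ({j ∈ M | x ∈ A j} : Finset ι).powersetCard k := by
    ext K
    simp only [mem_filter, mem_powersetCard, subset_iff]
    grind
  simp only [Set.indicator_apply, Set.mem_iInter₂, Pi.one_apply, sum_boole, hfilter,
    card_powersetCard, coverCount]

variable [MeasurableSpace Ω] {μ : Measure Ω} [IsFiniteMeasure μ] {A}

theorem integrable_sum_indicator_one {κ : Type*} (s : Finset κ) {B : κ → Set Ω}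
    (hB : ∀ i ∈ s, MeasurableSet (B i)) :
    Integrable (fun x => ∑ i ∈ s, (B i).indicator (1 : Ω → ℝ) x) μ :=
  integrable_finsetSum _ fun i hi => (integrable_const 1).indicator (hB i hi)

theorem integral_sum_indicator_one {κ : Type*} (s : Finset κ) {B : κ → Set Ω}
    (hB : ∀ i ∈ s, MeasurableSet (B i)) :
    ∫ x, ∑ i ∈ s, (B i).indicator (1 : Ω → ℝ) x ∂μ = ∑ i ∈ s, μ.real (B i) := by
  rw [integral_finsetSum _ fun i hi => (integrable_const 1).indicator (hB i hi)]
  exact sum_congr rfl fun i hi => integral_indicator_one (hB i hi)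

theorem integral_coverCount (hA : ∀ j, MeasurableSet (A j)) :
    ∫ x, (coverCount A M x : ℝ) ∂μ = ∑ j ∈ M, μ.real (A j) := by
  simp_rw [← sum_indicator_one_eq_coverCount]
  exact integral_sum_indicator_one M fun j _ => hA j

theorem integrable_choose_coverCount (hA : ∀ j, MeasurableSet (A j)) (k : ℕ) :
    Integrable (fun x => ((coverCount A M x).choose k : ℝ)) μ := by
  simp_rw [← sum_indicator_one_biInter_eq_choose_coverCount]
  exact integrable_sum_indicator_one _ fun K _ => K.measurableSet_biInter fun j _ => hA j

theorem integral_choose_coverCount (hA : ∀ j, MeasurableSet (A j)) (k : ℕ) :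
    ∫ x, ((coverCount A M x).choose k : ℝ) ∂μ =
      ∑ K ∈ M.powersetCard k, μ.real (⋂ j ∈ K, A j) := by
  simp_rw [← sum_indicator_one_biInter_eq_choose_coverCount]
  exact integral_sum_indicator_one _ fun K _ => K.measurableSet_biInter fun j _ => hA j

end CoverCount

theorem convexOn_max_sub_pow (c : ℝ) (k : ℕ) :
    ConvexOn ℝ Set.univ fun x : ℝ => max (x - c) 0 ^ k :=
  ((convexOn_id convex_univ).sub (concaveOn_const c convex_univ)).sup
    (convexOn_const 0 convex_univ) |>.pow (fun _ _ => le_max_right _ _) k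

theorem max_sub_pow_le_descFactorial (d k : ℕ) :
    max ((d : ℝ) - (k - 1)) 0 ^ k ≤ d.descFactorial k := by
  have hmax : max ((d : ℝ) - (k - 1)) 0 ≤ ((d + 1 - k : ℕ) : ℝ) := by
    refine max_le ?_ (Nat.cast_nonneg _)
    rcases le_or_gt k (d + 1) with h | h
    · rw [Nat.cast_sub h]; push_cast; linarith
    · have : (d : ℝ) + 1 < k := by exact_mod_cast h
      linarith [(Nat.cast_nonneg (d + 1 - k) : (0 : ℝ) ≤ _)]
  calc max ((d : ℝ) - (k - 1)) 0 ^ k ≤ ((d + 1 - k : ℕ) : ℝ) ^ k :=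
        pow_le_pow_left₀ (le_max_right _ _) hmax k
    _ ≤ d.descFactorial k := by exact_mod_cast Nat.pow_sub_le_descFactorial d k

open Nat in
theorem max_sub_pow_le_factorial_mul_sum_measureReal_biInter {Ω ι : Type*} [MeasurableSpace Ω]
    {μ : Measure Ω} [IsProbabilityMeasure μ] {A : ι → Set Ω} (M : Finset ι)
    (hA : ∀ j, MeasurableSet (A j)) (k : ℕ) {y : ℝ} (hy : y ≤ ∫ x, (coverCount A M x : ℝ) ∂μ) :
    max (y - (k - 1)) 0 ^ k ≤ k ! * ∑ K ∈ M.powersetCard k, μ.real (⋂ j ∈ K, A j) := by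
  set N : Ω → ℝ := fun x => coverCount A M x
  set g : ℝ → ℝ := fun y => max (y - (k - 1)) 0 ^ k
  have hN : Integrable N μ := by
    simpa only [choose_one_right] using integrable_choose_coverCount (μ := μ) M hA 1
  have hgN_le : ∀ x, g (N x) ≤ k ! * (coverCount A M x).choose k := fun x => by
    rw [← cast_mul, ← descFactorial_eq_factorial_mul_choose]
    exact max_sub_pow_le_descFactorial _ k
  have hchoose := (integrable_choose_coverCount (μ := μ) M hA k).const_mul (k ! : ℝ)
  have hgN : Integrable (fun x => g (N x)) μ :=
    hchoose.mono' ((by fun_prop : Continuous g).comp_aestronglyMeasurable hN.1)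
      (ae_of_all _ fun x => by
        rw [Real.norm_of_nonneg (pow_nonneg (le_max_right _ _) k)]
        exact hgN_le x)
  calc g y ≤ g (∫ x, N x ∂μ) :=
        pow_le_pow_left₀ (le_max_right _ _) (max_le_max_right 0 (by linarith)) k
    _ ≤ ∫ x, g (N x) ∂μ := (convexOn_max_sub_pow _ k).map_integral_le (by fun_prop)
        isClosed_univ (ae_of_all _ fun _ => trivial) hN hgN
    _ ≤ ∫ x, k ! * ((coverCount A M x).choose k : ℝ) ∂μ := integral_mono hgN hchoose hgN_le
    _ = k ! * ∑ K ∈ M.powersetCard k, μ.real (⋂ j ∈ K, A j) := by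
        rw [integral_const_mul, integral_choose_coverCount M hA]

open Nat in
theorem exists_subset_card_eq_pow_le_measure_biInter {Ω ι : Type*} [MeasurableSpace Ω]
    {μ : Measure Ω} [IsProbabilityMeasure μ] {A : ι → Set Ω} (M : Finset ι) {ε θ : ℝ}
    (hθ : 0 ≤ θ) {k : ℕ} (hA : ∀ j, MeasurableSet (A j))
    (hAε : ∀ j ∈ M, ENNReal.ofReal ε ≤ μ (A j)) (hM : k < (ε - θ) * #M) :
    ∃ K ⊆ M, #K = k ∧ ENNReal.ofReal (θ ^ k) ≤ μ (⋂ j ∈ K, A j) := by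
  have hmean : ε * #M ≤ ∫ x, (coverCount A M x : ℝ) ∂μ := by
    rw [integral_coverCount M hA]
    calc ε * #M = ∑ _j ∈ M, ε := by rw [sum_const, nsmul_eq_mul, mul_comm]
      _ ≤ ∑ j ∈ M, μ.real (A j) := sum_le_sum fun j hj =>
        (ENNReal.ofReal_le_iff_le_toReal (measure_ne_top μ _)).mp (hAε j hj)
  have hjensen := max_sub_pow_le_factorial_mul_sum_measureReal_biInter M hA k hmean
  have hθM : 0 ≤ θ * #M := by positivity
  have hθM_lt : θ * #M < ε * #M - (k - 1) := by linarith
  have hlower : k ! * (θ ^ k * (#M).choose k) ≤ max (ε * #M - (k - 1)) 0 ^ k :=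
    calc (k ! : ℝ) * (θ ^ k * (#M).choose k) = θ ^ k * (#M).descFactorial k := by
          rw [descFactorial_eq_factorial_mul_choose]; push_cast; ring
      _ ≤ θ ^ k * (#M : ℝ) ^ k := by
          gcongr; exact_mod_cast descFactorial_le_pow _ k
      _ = (θ * #M) ^ k := (mul_pow _ _ _).symm
      _ ≤ max (ε * #M - (k - 1)) 0 ^ k :=
          pow_le_pow_left₀ hθM (hθM_lt.le.trans (le_max_left _ _)) k
  have hpos : 0 < max (ε * #M - (k - 1)) 0 ^ k := pow_pos (lt_max_of_lt_left (by linarith)) k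
  have hne : (M.powersetCard k).Nonempty := nonempty_of_sum_ne_zero fun h0 => by
    rw [h0, mul_zero] at hjensen
    linarith
  have hsum : ∑ _K ∈ M.powersetCard k, θ ^ k ≤ ∑ K ∈ M.powersetCard k, μ.real (⋂ j ∈ K, A j) := by
    rw [sum_const, card_powersetCard, nsmul_eq_mul, mul_comm]
    exact le_of_mul_le_mul_left (hlower.trans hjensen) (by positivity)
  obtain ⟨K, hK, hθK⟩ := exists_le_of_sum_le hne hsum
  rw [mem_powersetCard] at hK
  exact ⟨K, hK.1, hK.2, ENNReal.ofReal_le_of_le_toReal hθK⟩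

theorem stmt_10_general (ε θ : ℝ) (hθ : 0 < θ) (hθε : θ < ε)
    (ℓ1 ℓ2 : ℕ) :
    ∃ ℓ3 : ℕ, 0 < ℓ3 ∧
      ∀ (Ω : Type) [MeasurableSpace Ω] (μ : Measure Ω) [IsProbabilityMeasure μ]
        (A : Fin ℓ3 → Set Ω),
        (∀ j, MeasurableSet (A j)) →
        (∀ j, ENNReal.ofReal ε ≤ μ (A j)) →
        ∃ L : Finset (Fin ℓ3), L.card = ℓ2 ∧
          ∀ K ⊆ L, K.card = ℓ1 →
            ENNReal.ofReal (θ ^ ℓ1) ≤ μ (⋂ j ∈ K, A j) := by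
  obtain ⟨m, hm⟩ := exists_nat_gt (ℓ1 / (ε - θ))
  have hℓ1m : ℓ1 < (ε - θ) * m := by
    rwa [div_lt_iff₀ (sub_pos.mpr hθε), mul_comm] at hm
  obtain ⟨n, hn⟩ := exists_ramseyArrow.{0} ℓ1 ℓ2 m
  refine ⟨n + 1, n.succ_pos, fun Ω _ μ _ A hA hAε => ?_⟩
  obtain ⟨L, -, hL | ⟨hLm, hLbad⟩⟩ :=
    hn univ (fun K => ENNReal.ofReal (θ ^ ℓ1) ≤ μ (⋂ j ∈ K, A j)) (by simp)
  · exact ⟨L, hL⟩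
  · obtain ⟨K, hKL, hK, hθK⟩ := exists_subset_card_eq_pow_le_measure_biInter L hθ.le hA
      (fun j _ => hAε j) (hLm ▸ hℓ1m)
    exact absurd hθK (hLbad K hKL hK)

theorem stmt_10 (ε θ : ℝ) (hθ : 0 < θ) (hθε : θ < ε)
    (ℓ1 ℓ2 : ℕ) (hℓ1 : 0 < ℓ1) (hℓ : ℓ1 < ℓ2) :
    ∃ ℓ3 : ℕ, 0 < ℓ3 ∧
      ∀ (Ω : Type) [MeasurableSpace Ω] (μ : Measure Ω) [IsProbabilityMeasure μ]
        (A : Fin ℓ3 → Set Ω),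
        (∀ j, MeasurableSet (A j)) →
        (∀ j, ENNReal.ofReal ε ≤ μ (A j)) →
        ∃ L : Finset (Fin ℓ3), L.card = ℓ2 ∧
          ∀ K ⊆ L, K.card = ℓ1 →
            ENNReal.ofReal (θ ^ ℓ1) ≤ μ (⋂ j ∈ K, A j) :=
  stmt_10_general ε θ hθ hθε ℓ1 ℓ2
end

section
/- Let 0 < θ < ε be reals and q, ℓ positive integers. Then there exists a positive integer k such that: for all probability spaces (Ω_1,μ_1), …, (Ω_q,μ_q) and sequences (A^i_j)_{j=1}^{k} of measurable sets in Ω_i with μ_i(A^i_j) ≥ ε for all i ∈ [q] and j ∈ [k], there exists a set L ⊆ [k] of size ℓ with μ_i(⋂_{j∈L} A^i_j) ≥ θ^ℓ for every i ∈ [q]. -/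
/-!
For one probability space and `X = ∑ j, 𝟙 (A j)`, Jensen's inequality gives
`∑ c : Fin ℓ → ι, μ (⋂ i, A (c i)) = 𝔼[X ^ ℓ] ≥ (ε k) ^ ℓ`. The non-injective tuples number
`k ^ ℓ - k.descFactorial ℓ = o(k ^ ℓ)` and contribute at most `1` each, so if every `ℓ`-set of
indices had intersection of measure `< θ ^ ℓ`, the sum would be at most `(θ k) ^ ℓ + o(k ^ ℓ)`,
which is `< (ε k) ^ ℓ` for large `k`.

Colouring the `ℓ`-sets of indices by whether their intersection has measure `≥ θ ^ ℓ`, the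
hypergraph Ramsey theorem gives a large monochromatic index set, and the previous bound applied
inside it shows that its colour is "good". So among enough indices there are `m` indices all of
whose `ℓ`-subsets are good, and passing from one space to the next inside such index sets handles
`q` spaces at once.
-/

open MeasureTheory Finset Filter
open Fintype (card)

universe u v

namespace Ramsey

variable {α κ : Type*}

def IsMonochromatic (χ : Finset α → κ) (r : ℕ) (H : Finset α) : Prop :=
  ∃ b, ∀ s ∈ H.powersetCard r, χ s = b

variable [LinearOrder α]

/-- The colour of an `(r + 1)`-subset of `W` depends only on its least element. -/
def IsMinHomogeneous (χ : Finset α → κ) (r : ℕ) (W : Finset α) : Prop :=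
  ∃ c : α → κ, ∀ a ∈ W, ∀ s ∈ (W.filter (a < ·)).powersetCard r, χ (insert a s) = c a

theorem IsMinHomogeneous.insert_min {χ : Finset α → κ} {r : ℕ} {W : Finset α} {v : α}
    (hv : ∀ a ∈ W, v < a) (hW : IsMinHomogeneous χ r W)
    (hlink : IsMonochromatic (fun s => χ (insert v s)) r W) :
    IsMinHomogeneous χ r (insert v W) := by
  classical
  obtain ⟨c, hc⟩ := hW
  obtain ⟨b, hb⟩ := hlink
  refine ⟨Function.update c v b, fun a ha s hs => ?_⟩
  rcases mem_insert.1 ha with rfl | ha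
  · have hfilter : (insert a W).filter (a < ·) = W := by
      rw [filter_insert, if_neg (lt_irrefl a), filter_true_of_mem hv]
    rw [hfilter] at hs
    simpa using hb s hs
  · have hva := hv a ha
    have hfilter : (insert v W).filter (a < ·) = W.filter (a < ·) := by
      rw [filter_insert, if_neg (not_lt.2 hva.le)]
    rw [hfilter] at hs
    rw [Function.update_of_ne hva.ne', hc a ha s hs]

theorem IsMinHomogeneous.exists_isMonochromatic [Fintype κ] {χ : Finset α → κ} {r m : ℕ}
    {W : Finset α} (hW : IsMinHomogeneous χ r W) (hcard : card κ * m ≤ #W) :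
    ∃ H ⊆ W, #H = m ∧ IsMonochromatic χ (r + 1) H := by
  classical
  obtain ⟨c, hc⟩ := hW
  obtain ⟨b, -, hb⟩ := exists_le_card_fiber_of_mul_le_card_of_maps_to
    (f := c) (fun a _ => mem_univ (c a)) ⟨χ ∅, mem_univ _⟩ (by rwa [card_univ])
  obtain ⟨H, hHb, hHcard⟩ := exists_subset_card_eq hb
  have hHW : H ⊆ W := hHb.trans (filter_subset _ _)
  refine ⟨H, hHW, hHcard, b, fun s hs => ?_⟩
  obtain ⟨hsH, hscard⟩ := mem_powersetCard.1 hs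
  have hne : s.Nonempty := card_pos.1 (by omega)
  set a := s.min' hne
  have haH : a ∈ H := hsH (s.min'_mem hne)
  have hrest : s.erase a ∈ (W.filter (a < ·)).powersetCard r := by
    refine mem_powersetCard.2 ⟨fun x hx => mem_filter.2 ⟨hHW (hsH (mem_of_mem_erase hx)), ?_⟩, ?_⟩
    · exact s.min'_lt_of_mem_erase_min' hne hx
    · rw [card_erase_of_mem (s.min'_mem hne), hscard, Nat.add_sub_cancel]
  rw [← insert_erase (s.min'_mem hne), hc a (hHW haH) _ hrest]
  exact (mem_filter.1 (hHb haH)).2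

theorem exists_isMinHomogeneous (κ : Type*) {r : ℕ}
    (hR : ∀ m, ∃ N, ∀ {α : Type u} [LinearOrder α] (V : Finset α) (χ : Finset α → κ), N ≤ #V →
      ∃ H ⊆ V, #H = m ∧ IsMonochromatic χ r H) (t : ℕ) :
    ∃ N, ∀ {α : Type u} [LinearOrder α] (V : Finset α) (χ : Finset α → κ), N ≤ #V →
      ∃ W ⊆ V, #W = t ∧ IsMinHomogeneous χ r W := by
  induction t with
  | zero => exact ⟨0, fun V χ _ => ⟨∅, empty_subset V, rfl, fun _ => χ ∅, by simp⟩⟩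
  | succ t ih =>
    obtain ⟨Nt, hNt⟩ := ih
    obtain ⟨NR, hNR⟩ := hR Nt
    refine ⟨NR + 1, fun {α} _ V χ hV => ?_⟩
    have hVne : V.Nonempty := card_pos.1 (by omega)
    set v := V.min' hVne
    have hvV : v ∈ V := V.min'_mem hVne
    obtain ⟨H, hHV, hHcard, hlink⟩ :=
      hNR (V.erase v) (fun s => χ (insert v s)) (by rw [card_erase_of_mem hvV]; omega)
    obtain ⟨W, hWH, hWcard, hW⟩ := hNt H χ hHcard.ge
    have hWV : W ⊆ V.erase v := hWH.trans hHV
    have hvW : v ∉ W := fun h => (mem_erase.1 (hWV h)).1 rfl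
    refine ⟨insert v W, insert_subset hvV (hWV.trans (erase_subset _ _)),
      by rw [card_insert_of_notMem hvW, hWcard], hW.insert_min (fun a ha => ?_) ?_⟩
    · exact V.min'_lt_of_mem_erase_min' hVne (hWV ha)
    · obtain ⟨b, hb⟩ := hlink
      exact ⟨b, fun s hs => hb s (powersetCard_mono hWH hs)⟩

theorem exists_isMonochromatic (κ : Type*) [Fintype κ] (r m : ℕ) :
    ∃ N, ∀ {α : Type u} [LinearOrder α] (V : Finset α) (χ : Finset α → κ), N ≤ #V →
      ∃ H ⊆ V, #H = m ∧ IsMonochromatic χ r H := by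
  induction r generalizing m with
  | zero =>
    refine ⟨m, fun V χ hV => ?_⟩
    obtain ⟨H, hHV, hHcard⟩ := exists_subset_card_eq hV
    exact ⟨H, hHV, hHcard, χ ∅, fun s hs => by rw [card_eq_zero.1 (mem_powersetCard.1 hs).2]⟩
  | succ r ih =>
    obtain ⟨N, hN⟩ := exists_isMinHomogeneous κ ih (card κ * m)
    refine ⟨N, fun V χ hV => ?_⟩
    obtain ⟨W, hWV, hWcard, hW⟩ := hN V χ hV
    obtain ⟨H, hHW, hHcard, hH⟩ := hW.exists_isMonochromatic hWcard.ge
    exact ⟨H, hHW.trans hWV, hHcard, hH⟩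

end Ramsey

section Moment

variable {ι Ω : Type*} [Fintype ι] [DecidableEq ι]

theorem pow_sum_indicator_one_apply (A : ι → Set Ω) (ℓ : ℕ) (x : Ω) :
    (∑ j, (A j).indicator (1 : Ω → ℝ) x) ^ ℓ
      = ∑ c : Fin ℓ → ι, (⋂ j ∈ univ.image c, A j).indicator 1 x := by
  simp only [Fintype.sum_pow, prod_indicator_const_apply, set_biInter_finset_image, one_pow]

theorem pow_sum_measureReal_le_sum_measureReal_biInter [MeasurableSpace Ω] (μ : Measure Ω)
    [IsProbabilityMeasure μ] {A : ι → Set Ω} (hA : ∀ j, MeasurableSet (A j)) (ℓ : ℕ) :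
    (∑ j, μ.real (A j)) ^ ℓ ≤ ∑ c : Fin ℓ → ι, μ.real (⋂ j ∈ univ.image c, A j) := by
  have hint : ∀ s : Set Ω, MeasurableSet s → Integrable (s.indicator (1 : Ω → ℝ)) μ :=
    fun s hs => (integrable_const 1).indicator hs
  have hmeas : ∀ s : Finset ι, MeasurableSet (⋂ j ∈ s, A j) :=
    fun s => .biInter s.countable_toSet fun j _ => hA j
  calc (∑ j, μ.real (A j)) ^ ℓ = (∫ x, ∑ j, (A j).indicator 1 x ∂μ) ^ ℓ := by
        rw [integral_finsetSum _ fun j _ => hint _ (hA j)]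
        simp only [integral_indicator_one (hA _)]
    _ ≤ ∫ x, (∑ j, (A j).indicator 1 x) ^ ℓ ∂μ := by
        refine (convexOn_pow ℓ).map_integral_le (continuous_pow ℓ).continuousOn isClosed_Ici
          (ae_of_all _ fun x => Set.mem_Ici.2 <|
            sum_nonneg fun j _ => Set.indicator_nonneg (fun _ _ => zero_le_one) x)
          (integrable_finsetSum _ fun j _ => hint _ (hA j)) ?_
        simp only [Function.comp_def, pow_sum_indicator_one_apply]
        exact integrable_finsetSum _ fun c _ => hint _ (hmeas _)
    _ = ∑ c : Fin ℓ → ι, μ.real (⋂ j ∈ univ.image c, A j) := by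
        simp only [pow_sum_indicator_one_apply]
        rw [integral_finsetSum _ fun c _ => hint _ (hmeas _)]
        simp only [integral_indicator_one (hmeas _)]

end Moment

theorem card_filter_injective_eq_descFactorial (ι : Type*) [Fintype ι] [DecidableEq ι] (ℓ : ℕ) :
    #{c : Fin ℓ → ι | c.Injective} = (card ι).descFactorial ℓ := by
  rw [← Fintype.card_subtype, Fintype.card_congr (Equiv.subtypeInjectiveEquivEmbedding _ _),
    Fintype.card_embedding_eq, Fintype.card_fin]

theorem exists_card_eq_le_of_lt_sum_image {ι : Type*} [Fintype ι] [DecidableEq ι] {ℓ : ℕ}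
    {g : Finset ι → ℝ} (hg : ∀ s, g s ≤ 1) {t : ℝ} (ht : 0 ≤ t)
    (hsum : (card ι : ℝ) ^ ℓ * t + ((card ι : ℝ) ^ ℓ - (card ι).descFactorial ℓ)
      < ∑ c : Fin ℓ → ι, g (univ.image c)) :
    ∃ L : Finset ι, #L = ℓ ∧ t ≤ g L := by
  by_contra! hsmall
  have hsplit := card_filter_add_card_filter_not (s := univ) fun c : Fin ℓ → ι => c.Injective
  rw [card_univ, Fintype.card_fun, Fintype.card_fin,
    card_filter_injective_eq_descFactorial] at hsplit
  have hbound : ∑ c : Fin ℓ → ι, g (univ.image c)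
      ≤ ∑ c : Fin ℓ → ι, if c.Injective then t else 1 :=
    sum_le_sum fun c _ => by
      split_ifs with hc
      · exact (hsmall _ (by rw [card_image_of_injective _ hc, card_univ, Fintype.card_fin])).le
      · exact hg _
  rw [sum_ite, sum_const, sum_const, card_filter_injective_eq_descFactorial, nsmul_eq_mul,
    nsmul_one] at hbound
  have hsplit' : ((card ι).descFactorial ℓ : ℝ) + #{c : Fin ℓ → ι | ¬c.Injective}
      = (card ι : ℝ) ^ ℓ := by exact_mod_cast hsplit
  have hdesc : ((card ι).descFactorial ℓ : ℝ) ≤ (card ι : ℝ) ^ ℓ := by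
    exact_mod_cast Nat.descFactorial_le_pow _ _
  linarith [mul_le_mul_of_nonneg_right hdesc ht]

theorem eventually_lt_descFactorial {δ : ℝ} (hδ : 0 < δ) (ℓ : ℕ) :
    ∀ᶠ k : ℕ in atTop, (1 - δ) * (k : ℝ) ^ ℓ < k.descFactorial ℓ := by
  have hpos : ∀ᶠ k : ℕ in atTop, (0 : ℝ) < (k : ℝ) ^ ℓ :=
    eventually_atTop.2 ⟨1, fun k hk => by positivity⟩
  have hratio := ((Asymptotics.isEquivalent_iff_tendsto_one (hpos.mono fun _ h => h.ne')).1
    (isEquivalent_descFactorial ℓ)).eventually (lt_mem_nhds (by linarith : 1 - δ < 1))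
  filter_upwards [hratio, hpos] with k hk hk0
  rwa [Pi.div_apply, lt_div_iff₀ hk0] at hk

theorem exists_card_eq_le_measureReal_biInter {ε θ : ℝ} (hθ : 0 ≤ θ) (hθε : θ < ε) {ℓ : ℕ}
    (hℓ : ℓ ≠ 0) :
    ∃ k₀ : ℕ, ∀ {ι : Type*} [Fintype ι], k₀ ≤ card ι →
      ∀ {Ω : Type*} [MeasurableSpace Ω] (μ : Measure Ω) [IsProbabilityMeasure μ]
        (A : ι → Set Ω), (∀ j, MeasurableSet (A j)) → (∀ j, ε ≤ μ.real (A j)) →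
        ∃ L : Finset ι, #L = ℓ ∧ θ ^ ℓ ≤ μ.real (⋂ j ∈ L, A j) := by
  obtain ⟨k₀, hk₀⟩ := eventually_atTop.1
    (eventually_lt_descFactorial (sub_pos.2 (pow_lt_pow_left₀ hθε hθ hℓ)) ℓ)
  refine ⟨k₀, fun {ι} _ hk Ω _ μ _ A hA hAε => ?_⟩
  classical
  refine exists_card_eq_le_of_lt_sum_image (fun _ => measureReal_le_one) (pow_nonneg hθ ℓ) ?_
  have hmean : ε * card ι ≤ ∑ j, μ.real (A j) := by
    simpa [mul_comm] using sum_le_sum fun j (_ : j ∈ univ) => hAε j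
  have hdesc := hk₀ _ hk
  calc (card ι : ℝ) ^ ℓ * θ ^ ℓ + ((card ι : ℝ) ^ ℓ - (card ι).descFactorial ℓ)
      < (ε * card ι) ^ ℓ := by rw [mul_pow]; linarith
    _ ≤ (∑ j, μ.real (A j)) ^ ℓ :=
      pow_le_pow_left₀ (mul_nonneg (hθ.trans hθε.le) (Nat.cast_nonneg _)) hmean ℓ
    _ ≤ _ := pow_sum_measureReal_le_sum_measureReal_biInter μ hA ℓ

theorem exists_forall_powersetCard_le_measureReal_biInter {ε θ : ℝ} (hθ : 0 ≤ θ) (hθε : θ < ε)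
    {ℓ : ℕ} (hℓ : ℓ ≠ 0) (m : ℕ) :
    ∃ k : ℕ, ∀ {ι : Type u} [LinearOrder ι] (K : Finset ι), k ≤ #K →
      ∀ {Ω : Type v} [MeasurableSpace Ω] (μ : Measure Ω) [IsProbabilityMeasure μ]
        (A : ι → Set Ω), (∀ j, MeasurableSet (A j)) → (∀ j, ε ≤ μ.real (A j)) →
        ∃ M ⊆ K, #M = m ∧ ∀ S ∈ M.powersetCard ℓ, θ ^ ℓ ≤ μ.real (⋂ j ∈ S, A j) := by
  obtain ⟨k₀, hk₀⟩ := exists_card_eq_le_measureReal_biInter hθ hθε hℓ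
  obtain ⟨N, hN⟩ := Ramsey.exists_isMonochromatic Prop ℓ (max m k₀)
  refine ⟨N, fun K hK Ω _ μ _ A hA hAε => ?_⟩
  classical
  obtain ⟨H, hHK, hHcard, b, hb⟩ := hN K (fun S => θ ^ ℓ ≤ μ.real (⋂ j ∈ S, A j)) hK
  obtain ⟨L, hLcard, hL⟩ := hk₀ (ι := H) (by simp [hHcard]) μ
    (fun j => A j) (fun j => hA j) (fun j => hAε j)
  beta_reduce at hb
  -- the single-space bound inside `H` rules out the bad colour
  have hLH : L.image Subtype.val ∈ H.powersetCard ℓ := by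
    refine mem_powersetCard.2 ⟨fun x hx => ?_, ?_⟩
    · obtain ⟨y, -, rfl⟩ := mem_image.1 hx
      exact y.2
    · rw [card_image_of_injective _ Subtype.val_injective, hLcard]
  have hgood : b := (hb _ hLH).mp (by rwa [set_biInter_finset_image])
  obtain ⟨M, hMH, hMcard⟩ := exists_subset_card_eq (hHcard ▸ le_max_left m k₀ : m ≤ #H)
  refine ⟨M, hMH.trans hHK, hMcard, fun S hS => ?_⟩
  exact (hb S (powersetCard_mono hMH hS)).mpr hgood

theorem exists_card_eq_forall_le_measureReal_biInter {ε θ : ℝ} (hθ : 0 ≤ θ) (hθε : θ < ε)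
    {ℓ : ℕ} (hℓ : ℓ ≠ 0) (q : ℕ) :
    ∃ k : ℕ, ∀ {ι : Type u} [LinearOrder ι] (K : Finset ι), k ≤ #K →
      ∀ {Ω : Fin q → Type v} [∀ i, MeasurableSpace (Ω i)] (μ : ∀ i, Measure (Ω i))
        [∀ i, IsProbabilityMeasure (μ i)] (A : ∀ i, ι → Set (Ω i)),
        (∀ i j, MeasurableSet (A i j)) → (∀ i j, ε ≤ (μ i).real (A i j)) →
        ∃ L ⊆ K, #L = ℓ ∧ ∀ i, θ ^ ℓ ≤ (μ i).real (⋂ j ∈ L, A i j) := by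
  induction q with
  | zero =>
    refine ⟨ℓ, fun K hK _ _ _ _ _ _ _ => ?_⟩
    obtain ⟨L, hLK, hLcard⟩ := exists_subset_card_eq hK
    exact ⟨L, hLK, hLcard, finZeroElim⟩
  | succ q ih =>
    obtain ⟨k', hk'⟩ := ih
    obtain ⟨k, hk⟩ := exists_forall_powersetCard_le_measureReal_biInter hθ hθε hℓ k'
    refine ⟨k, fun K hK Ω _ μ _ A hA hAε => ?_⟩
    obtain ⟨M, hMK, hMcard, hM⟩ := hk K hK (μ 0) (A 0) (hA 0) (hAε 0)
    obtain ⟨L, hLM, hLcard, hL⟩ := hk' M hMcard.ge (fun i => μ i.succ) (fun i => A i.succ)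
      (fun i => hA i.succ) (fun i => hAε i.succ)
    exact ⟨L, hLM.trans hMK, hLcard, Fin.cases (hM L (mem_powersetCard.2 ⟨hLM, hLcard⟩)) hL⟩

theorem stmt_11_general (ε θ : ℝ) (hθ : 0 < θ) (hθε : θ < ε)
    (q ℓ : ℕ) (hℓ : 0 < ℓ) :
    ∃ k : ℕ, 0 < k ∧
      ∀ (Ω : Fin q → Type) [∀ i, MeasurableSpace (Ω i)]
        (μ : ∀ i, Measure (Ω i)),
        (∀ i, IsProbabilityMeasure (μ i)) →
        ∀ (A : ∀ i : Fin q, Fin k → Set (Ω i)),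
          (∀ i j, MeasurableSet (A i j)) →
          (∀ i j, ENNReal.ofReal ε ≤ μ i (A i j)) →
          ∃ L : Finset (Fin k), L.card = ℓ ∧
            ∀ i : Fin q, ENNReal.ofReal (θ ^ ℓ) ≤ μ i (⋂ j ∈ L, A i j) := by
  obtain ⟨k, hk⟩ := exists_card_eq_forall_le_measureReal_biInter hθ.le hθε hℓ.ne' q
  refine ⟨max k 1, by positivity, fun Ω _ μ _ A hA hAε => ?_⟩
  obtain ⟨L, -, hLcard, hL⟩ := hk (univ : Finset (Fin (max k 1))) (by simp) μ A hA
    fun i j => (ENNReal.ofReal_le_iff_le_toReal (measure_ne_top _ _)).1 (hAε i j)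
  exact ⟨L, hLcard, fun i => ENNReal.ofReal_le_of_le_toReal (hL i)⟩

theorem stmt_11 (ε θ : ℝ) (hθ : 0 < θ) (hθε : θ < ε)
    (q ℓ : ℕ) (hq : 0 < q) (hℓ : 0 < ℓ) :
    ∃ k : ℕ, 0 < k ∧
      ∀ (Ω : Fin q → Type) [∀ i, MeasurableSpace (Ω i)]
        (μ : ∀ i, Measure (Ω i)),
        (∀ i, IsProbabilityMeasure (μ i)) →
        ∀ (A : ∀ i : Fin q, Fin k → Set (Ω i)),
          (∀ i j, MeasurableSet (A i j)) →
          (∀ i j, ENNReal.ofReal ε ≤ μ i (A i j)) →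
          ∃ L : Finset (Fin k), L.card = ℓ ∧
            ∀ i : Fin q, ENNReal.ofReal (θ ^ ℓ) ≤ μ i (⋂ j ∈ L, A i j) :=
  stmt_11_general ε θ hθ hθε q ℓ hℓ
end

section
/- Let B' be the blow-up of K2 ∪ K2 with four parts V1, V2, V3, V4 each of size n/4 + O(1) (so the parts V1,V2 are completely joined, the parts V3,V4 are completely joined, and there are no other edges). Let Λ(G) denote the number of 4-subsets of V(G) inducing a copy of P3 ∪ K1 (the disjoint union of a path on three vertices and an isolated vertex). Then for any two distinct vertices x, y of B', flipping the adjacency of the pair {x,y} decreases Λ by at least n²/16 + O(n): specifically, Λ(B') − Λ(B' ⊕ xy) equals 3n²/16 + O(n) if x,y lie in two joined parts, n²/16 + O(n) if x,y lie in two different non-joined parts, and n²/8 + O(n) if x,y lie in the same part. -/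
/-- The adjacency pattern of the graph `K2 ∪ K2` on parts `{0,1}` and `{2,3}`. -/
def matched (a b : Fin 4) : Prop :=
  (a.val = 0 ∧ b.val = 1) ∨ (a.val = 1 ∧ b.val = 0) ∨
  (a.val = 2 ∧ b.val = 3) ∨ (a.val = 3 ∧ b.val = 2)

/-- The blow-up of `K2 ∪ K2` with parts given by the colouring `P`. -/
def blowK2K2 (n : ℕ) (P : Fin n → Fin 4) : SimpleGraph (Fin n) where
  Adj u v := matched (P u) (P v)
  symm := ⟨by intro u v h; unfold matched at *; tauto⟩
  loopless := ⟨by intro v h; unfold matched at h; omega⟩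

/-- The graph `P3 ∪ K1`: a path `0-1-2` plus the isolated vertex `3`. -/
def P3K1 : SimpleGraph (Fin 4) where
  Adj u v := (u.val = 0 ∧ v.val = 1) ∨ (u.val = 1 ∧ v.val = 0) ∨
    (u.val = 1 ∧ v.val = 2) ∨ (u.val = 2 ∧ v.val = 1)
  symm := ⟨by intro u v h; tauto⟩
  loopless := ⟨by intro v h; omega⟩

/-- The number of 4-subsets of the vertex set inducing a copy of `P3 ∪ K1`. -/
noncomputable def countP3K1 (n : ℕ) (G : SimpleGraph (Fin n)) : ℕ :=
  Nat.card {X : Finset (Fin n) // X.card = 4 ∧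
    Nonempty (G.induce (↑X : Set (Fin n)) ≃g P3K1)}

/-- Flip the adjacency of the single pair `{x, y}` in `G`. -/
noncomputable def flipEdge {V : Type} (G : SimpleGraph V) (x y : V) : SimpleGraph V :=
  letI := Classical.dec (G.Adj x y)
  if G.Adj x y then G \ SimpleGraph.edge x y else G ⊔ SimpleGraph.edge x y

/-!
Flipping `xy` only changes the status of the 4-sets containing both `x` and `y`. Whether
`{x, y, u, v}` induces `P3 ∪ K1` before or after the flip depends only on the parts `a, b, s, t`
of `x, y, u, v`; `flipLoss a b s t` records the resulting change. Summing over ordered pairs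
`(u, v)`, `2 (Λ(B') - Λ(B' ⊕ xy))` is a sum of `flipLoss` weighted by the number of ordered pairs
in each pair of parts, which is `n² / 16 + O(n)`. A finite check shows that the weights
`flipLoss a b s t` sum to `6`, `2` or `4` according as `a, b` are joined, distinct and not joined,
or equal.
-/
open Finset SimpleGraph

instance : ∀ a b, Decidable (matched a b) := fun _ _ => by unfold matched; infer_instance

theorem not_matched_self (a : Fin 4) : ¬ matched a a := by unfold matched; omega

instance : DecidableRel P3K1.Adj := fun _ _ => by unfold P3K1; infer_instance

instance {n : ℕ} (P : Fin n → Fin 4) : DecidableRel (blowK2K2 n P).Adj :=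
  fun u v => inferInstanceAs (Decidable (matched (P u) (P v)))

instance {V W : Type*} [Fintype V] [DecidableEq V] [Fintype W] [DecidableEq W]
    (G : SimpleGraph V) (H : SimpleGraph W) [DecidableRel G.Adj] [DecidableRel H.Adj] :
    Decidable (Nonempty (G ≃g H)) :=
  decidable_of_iff (∃ e : V ≃ W, ∀ a b, H.Adj (e a) (e b) ↔ G.Adj a b)
    ⟨fun ⟨e, he⟩ => ⟨⟨e, he _ _⟩⟩, fun ⟨e⟩ => ⟨e.toEquiv, fun _ _ => e.map_rel_iff⟩⟩

section flipEdge

variable {V : Type} (G : SimpleGraph V)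

theorem flipEdge_adj (x y v w : V) :
    (flipEdge G x y).Adj v w ↔ Xor (G.Adj v w) ((edge x y).Adj v w) := by
  have hxy : (edge x y).Adj v w → (G.Adj v w ↔ G.Adj x y) := by
    rw [edge_adj]
    rintro ⟨⟨rfl, rfl⟩ | ⟨rfl, rfl⟩, -⟩
    exacts [Iff.rfl, G.adj_comm _ _]
  unfold flipEdge
  split_ifs <;> simp only [sdiff_adj, sup_adj, Xor] <;> tauto

instance [DecidableEq V] [DecidableRel G.Adj] (x y : V) : DecidableRel (flipEdge G x y).Adj :=
  fun v w => decidable_of_iff (Xor (G.Adj v w) ((v = x ∧ w = y ∨ v = y ∧ w = x) ∧ v ≠ w))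
    (by rw [flipEdge_adj, edge_adj])

theorem comap_flipEdge {W : Type} {f : W → V} (hf : f.Injective) (i j : W) :
    (flipEdge G (f i) (f j)).comap f = flipEdge (G.comap f) i j := by
  ext v w
  simp only [comap_adj, flipEdge_adj, edge_adj, hf.eq_iff, hf.ne_iff]

theorem induce_flipEdge {s : Set V} {x y : V} (h : ¬ (x ∈ s ∧ y ∈ s)) :
    (flipEdge G x y).induce s = G.induce s := by
  have hvw (v w : s) : ¬ (edge x y).Adj v w := by
    rw [edge_adj]
    rintro ⟨⟨hv, hw⟩ | ⟨hv, hw⟩, -⟩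
    exacts [h ⟨hv ▸ v.2, hw ▸ w.2⟩, h ⟨hw ▸ w.2, hv ▸ v.2⟩]
  ext v w
  simp [flipEdge_adj, hvw, Xor]

end flipEdge

section induced

variable {V : Type*} (G : SimpleGraph V)

def InducesP3K1 (X : Finset V) : Prop :=
  X.card = 4 ∧ Nonempty (G.induce (X : Set V) ≃g P3K1)

theorem image_univ_vecCons_four [DecidableEq V] (x y u v : V) :
    univ.image ![x, y, u, v] = {x, y, u, v} := by
  ext; simp [Fin.exists_fin_succ, eq_comm]

theorem injective_vecCons_four [DecidableEq V] {x y u v : V}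
    (h : ({x, y, u, v} : Finset V).card = 4) : (![x, y, u, v]).Injective := by
  rw [← image_univ_vecCons_four, ← card_fin 4, card_image_iff, coe_univ] at h
  exact Set.injOn_univ.1 h

theorem inducesP3K1_insert_iff [DecidableEq V] {x y u v : V}
    (h : ({x, y, u, v} : Finset V).card = 4) :
    InducesP3K1 G {x, y, u, v} ↔ Nonempty (G.comap ![x, y, u, v] ≃g P3K1) := by
  have hrange : (({x, y, u, v} : Finset V) : Set V) = Set.range ![x, y, u, v] := by
    rw [← image_univ_vecCons_four, coe_image, coe_univ, Set.image_univ]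
  let e : G.comap ![x, y, u, v] ≃g G.induce (Set.range ![x, y, u, v]) :=
    (Embedding.comap ⟨_, injective_vecCons_four h⟩ G).isoInduceRange
  rw [InducesP3K1, hrange]
  exact ⟨fun ⟨_, ⟨φ⟩⟩ => ⟨e.trans φ⟩, fun ⟨φ⟩ => ⟨h, ⟨e.symm.trans φ⟩⟩⟩

end induced

theorem comap_blowK2K2 {m n : ℕ} (P : Fin n → Fin 4) (f : Fin m → Fin n) :
    (blowK2K2 n P).comap f = blowK2K2 m (P ∘ f) := rfl

noncomputable def flipLoss (a b s t : Fin 4) : ℤ :=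
  (if Nonempty (blowK2K2 4 ![a, b, s, t] ≃g P3K1) then 1 else 0) -
    (if Nonempty (flipEdge (blowK2K2 4 ![a, b, s, t]) 0 1 ≃g P3K1) then 1 else 0)

theorem abs_flipLoss_le_one (a b s t : Fin 4) : |flipLoss a b s t| ≤ 1 := by
  unfold flipLoss; split_ifs <;> norm_num

theorem sum_flipLoss (a b : Fin 4) :
    ∑ st : Fin 4 × Fin 4, flipLoss a b st.1 st.2 =
      if matched a b then 6 else if a = b then 4 else 2 := by
  revert a b; decide +kernel

section pairs

variable {V : Type*} [Fintype V] [DecidableEq V] {x y : V}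

theorem card_insert_insert_of_mem_offDiag (hxy : x ≠ y) {uv : V × V}
    (huv : uv ∈ ({x, y}ᶜ : Finset V).offDiag) : ({x, y, uv.1, uv.2} : Finset V).card = 4 := by
  simp only [mem_offDiag, mem_compl, mem_insert, mem_singleton, not_or] at huv
  obtain ⟨⟨hux, huy⟩, ⟨hvx, hvy⟩, huv⟩ := huv
  exact card_eq_four.2 ⟨x, y, uv.1, uv.2, hxy, Ne.symm hux, Ne.symm hvx, Ne.symm huy,
    Ne.symm hvy, huv, rfl⟩

theorem filter_offDiag_insert_insert_eq {X : Finset V} (hx : x ∈ X) (hy : y ∈ X)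
    (hX : X.card = 4) (hxy : x ≠ y) :
    {uv ∈ ({x, y}ᶜ : Finset V).offDiag | {x, y, uv.1, uv.2} = X} = (X \ {x, y}).offDiag := by
  ext uv
  simp only [mem_filter, mem_offDiag, mem_sdiff, mem_compl]
  constructor
  · rintro ⟨⟨hu, hv, huv⟩, rfl⟩
    simp [hu, hv, huv]
  · rintro ⟨⟨huX, hu⟩, ⟨hvX, hv⟩, huv⟩
    have hmem : uv ∈ ({x, y}ᶜ : Finset V).offDiag := by simp_all
    refine ⟨⟨hu, hv, huv⟩, eq_of_subset_of_card_le ?_ ?_⟩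
    · simp [insert_subset_iff, hx, hy, huX, hvX]
    · rw [hX, card_insert_insert_of_mem_offDiag hxy hmem]

theorem two_nsmul_sum_card_eq_four {M : Type*} [AddCommMonoid M] (hxy : x ≠ y)
    (g : Finset V → M) :
    2 • ∑ X with X.card = 4 ∧ x ∈ X ∧ y ∈ X, g X =
      ∑ uv ∈ ({x, y}ᶜ : Finset V).offDiag, g {x, y, uv.1, uv.2} := by
  have hmaps : ∀ uv ∈ ({x, y}ᶜ : Finset V).offDiag,
      ({x, y, uv.1, uv.2} : Finset V) ∈ ({X | X.card = 4 ∧ x ∈ X ∧ y ∈ X} : Finset _) := by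
    intro uv huv
    simp [card_insert_insert_of_mem_offDiag hxy huv]
  rw [← sum_fiberwise_of_maps_to' hmaps, smul_sum]
  refine sum_congr rfl fun X hX => ?_
  obtain ⟨hX, hx, hy⟩ := (mem_filter.1 hX).2
  have hsub : ({x, y} : Finset V) ⊆ X := by simp [insert_subset_iff, hx, hy]
  rw [sum_const, filter_offDiag_insert_insert_eq hx hy hX hxy, offDiag_card,
    card_sdiff_of_subset hsub, hX, card_pair hxy]

end pairs

open Classical in
theorem countP3K1_eq_sum {n : ℕ} (G : SimpleGraph (Fin n)) :
    (countP3K1 n G : ℤ) = ∑ X, if InducesP3K1 G X then 1 else 0 := by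
  rw [countP3K1, Nat.card_eq_fintype_card, Fintype.card_subtype, natCast_card_filter]
  exact sum_congr rfl fun X _ => if_congr Iff.rfl rfl rfl

theorem two_mul_countP3K1_sub_flipEdge {n : ℕ} (P : Fin n → Fin 4) {x y : Fin n} (hxy : x ≠ y) :
    2 * ((countP3K1 n (blowK2K2 n P) : ℤ) - countP3K1 n (flipEdge (blowK2K2 n P) x y)) =
      ∑ uv ∈ ({x, y}ᶜ : Finset (Fin n)).offDiag, flipLoss (P x) (P y) (P uv.1) (P uv.2) := by
  classical
  set G := blowK2K2 n P
  let δ (X : Finset (Fin n)) : ℤ :=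
    (if InducesP3K1 G X then 1 else 0) - (if InducesP3K1 (flipEdge G x y) X then 1 else 0)
  have hlocal : ∑ X, δ X = ∑ X with X.card = 4 ∧ x ∈ X ∧ y ∈ X, δ X := by
    refine (sum_subset (subset_univ _) fun X _ hX => ?_).symm
    by_cases hxyX : x ∈ X ∧ y ∈ X
    · have hcard : X.card ≠ 4 := fun h => hX (mem_filter.2 ⟨mem_univ _, h, hxyX⟩)
      simp [δ, InducesP3K1, hcard]
    · have hflip : InducesP3K1 (flipEdge G x y) X ↔ InducesP3K1 G X := by
        rw [InducesP3K1, InducesP3K1, induce_flipEdge G (by simpa using hxyX)]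
      exact sub_eq_zero.2 (if_congr hflip.symm rfl rfl)
  have hloss : ∀ uv ∈ ({x, y}ᶜ : Finset (Fin n)).offDiag,
      δ {x, y, uv.1, uv.2} = flipLoss (P x) (P y) (P uv.1) (P uv.2) := by
    intro uv huv
    have hcard := card_insert_insert_of_mem_offDiag hxy huv
    have hcomap : G.comap ![x, y, uv.1, uv.2] = blowK2K2 4 ![P x, P y, P uv.1, P uv.2] :=
      (comap_blowK2K2 P _).trans (congrArg _ (by funext i; fin_cases i <;> rfl))
    have hflip : (flipEdge G x y).comap ![x, y, uv.1, uv.2] =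
        flipEdge (G.comap ![x, y, uv.1, uv.2]) 0 1 :=
      comap_flipEdge G (injective_vecCons_four hcard) 0 1
    simp only [δ, inducesP3K1_insert_iff _ hcard, hflip, hcomap, flipLoss]
  rw [countP3K1_eq_sum, countP3K1_eq_sum, ← sum_sub_distrib, hlocal, two_mul, ← two_nsmul,
    two_nsmul_sum_card_eq_four hxy, sum_congr rfl hloss]

theorem abs_mul_sub_sq_le {a b m δ : ℝ} (ha : |a - m| ≤ δ) (hb : |b - m| ≤ δ) (hm : 0 ≤ m) :
    |a * b - m ^ 2| ≤ 2 * m * δ + δ ^ 2 := by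
  have hδ : 0 ≤ δ := (abs_nonneg _).trans ha
  calc |a * b - m ^ 2| = |(a - m) * (b - m) + m * (a - m) + m * (b - m)| := by ring_nf
    _ ≤ |a - m| * |b - m| + m * |a - m| + m * |b - m| := by
      simpa only [abs_mul, abs_of_nonneg hm] using
        abs_add_three ((a - m) * (b - m)) (m * (a - m)) (m * (b - m))
    _ ≤ δ * δ + m * δ + m * δ := by gcongr
    _ = 2 * m * δ + δ ^ 2 := by ring

section typeCounting

variable {V ι : Type*} [DecidableEq V] [DecidableEq ι]
  (S : Finset V) (P : V → ι) {m δ : ℝ}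

theorem abs_card_offDiag_types_sub_sq_le (hP : ∀ s, |(#{u ∈ S | P u = s} : ℝ) - m| ≤ δ)
    (hm : 0 ≤ m) (s t : ι) :
    |(#{uv ∈ S.offDiag | (P uv.1, P uv.2) = (s, t)} : ℝ) - m ^ 2| ≤
      2 * m * δ + δ ^ 2 + m + δ := by
  set A := {u ∈ S | P u = s}
  set B := {u ∈ S | P u = t}
  have hle : #{uv ∈ S.offDiag | (P uv.1, P uv.2) = (s, t)} ≤ #A * #B := by
    rw [← card_product]
    refine card_le_card fun uv huv => ?_
    simp_all [A, B]
  have hge : #A * #B ≤ #{uv ∈ S.offDiag | (P uv.1, P uv.2) = (s, t)} + #A := by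
    rw [← card_product, ← diag_card A]
    refine (card_le_card fun uv huv => ?_).trans (card_union_le _ _)
    by_cases h : uv.1 = uv.2 <;> simp_all [A, B]
  have hprod := abs_mul_sub_sq_le (hP s) (hP t) hm
  have hA := (abs_le.1 (hP s)).2
  have hle' : (#{uv ∈ S.offDiag | (P uv.1, P uv.2) = (s, t)} : ℝ) ≤ #A * #B := by
    exact_mod_cast hle
  have hge' : (#A * #B : ℝ) ≤ #{uv ∈ S.offDiag | (P uv.1, P uv.2) = (s, t)} + #A := by
    exact_mod_cast hge
  rw [abs_le] at hprod ⊢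
  constructor <;> linarith [(#A).cast_nonneg (α := ℝ)]

theorem abs_sum_offDiag_sub_le [Fintype ι] (w : ι → ι → ℝ) (hw : ∀ s t, |w s t| ≤ 1)
    (hP : ∀ s, |(#{u ∈ S | P u = s} : ℝ) - m| ≤ δ) (hm : 0 ≤ m) :
    |∑ uv ∈ S.offDiag, w (P uv.1) (P uv.2) - m ^ 2 * ∑ st : ι × ι, w st.1 st.2| ≤
      Fintype.card ι ^ 2 * (2 * m * δ + δ ^ 2 + m + δ) := by
  rw [← sum_fiberwise' S.offDiag (fun uv => (P uv.1, P uv.2)) (fun st => w st.1 st.2), mul_sum,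
    ← sum_sub_distrib]
  calc _ ≤ ∑ st : ι × ι, |w st.1 st.2| *
          |(#{uv ∈ S.offDiag | (P uv.1, P uv.2) = st} : ℝ) - m ^ 2| := by
        refine (abs_sum_le_sum_abs _ _).trans (le_of_eq (sum_congr rfl fun st _ => ?_))
        rw [sum_const, nsmul_eq_mul, ← abs_mul]
        ring_nf
    _ ≤ ∑ _st : ι × ι, 1 * (2 * m * δ + δ ^ 2 + m + δ) := by
        gcongr with st
        exacts [hw _ _, abs_card_offDiag_types_sub_sq_le S P hP hm st.1 st.2]
    _ = _ := by
        rw [sum_const, card_univ, Fintype.card_prod, nsmul_eq_mul, one_mul]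
        push_cast; ring

end typeCounting

theorem card_filter_le_card_filter_compl_add {V : Type*} [Fintype V] [DecidableEq V]
    (T : Finset V) (p : V → Prop) [DecidablePred p] :
    #{u | p u} ≤ #{u ∈ Tᶜ | p u} + #T :=
  (card_le_card fun u hu => by by_cases h : u ∈ T <;> simp_all).trans (card_union_le _ _)

theorem abs_countP3K1_sub_flipEdge_sub_le {c : ℝ} (hc : 0 ≤ c) {n : ℕ} (P : Fin n → Fin 4)
    (hP : ∀ i : Fin 4, |(#{v | P v = i} : ℝ) - n / 4| ≤ c) {x y : Fin n} (hxy : x ≠ y) :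
    |((countP3K1 n (blowK2K2 n P) : ℝ) - countP3K1 n (flipEdge (blowK2K2 n P) x y)) -
        n ^ 2 / 32 * ∑ st : Fin 4 × Fin 4, (flipLoss (P x) (P y) st.1 st.2 : ℝ)| ≤
      8 * (c + 3) ^ 2 * n := by
  have hparts (s : Fin 4) :
      |(#{u ∈ ({x, y}ᶜ : Finset (Fin n)) | P u = s} : ℝ) - n / 4| ≤ c + 2 := by
    have hle : #{u ∈ ({x, y}ᶜ : Finset (Fin n)) | P u = s} ≤ #{u | P u = s} :=
      card_le_card (filter_subset_filter _ (subset_univ _))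
    have hge := card_filter_le_card_filter_compl_add {x, y} (P · = s)
    rw [card_pair hxy] at hge
    have hle' : (#{u ∈ ({x, y}ᶜ : Finset (Fin n)) | P u = s} : ℝ) ≤ #{u | P u = s} := by
      exact_mod_cast hle
    have hge' : (#{u | P u = s} : ℝ) ≤ #{u ∈ ({x, y}ᶜ : Finset (Fin n)) | P u = s} + 2 := by
      exact_mod_cast hge
    have := abs_le.1 (hP s)
    rw [abs_le]
    constructor <;> linarith
  have hcount : 2 * ((countP3K1 n (blowK2K2 n P) : ℝ) -
      countP3K1 n (flipEdge (blowK2K2 n P) x y)) = ∑ uv ∈ ({x, y}ᶜ : Finset (Fin n)).offDiag,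
        (flipLoss (P x) (P y) (P uv.1) (P uv.2) : ℝ) := by
    exact_mod_cast two_mul_countP3K1_sub_flipEdge P hxy
  have hsum := abs_sum_offDiag_sub_le _ P (fun s t => (flipLoss (P x) (P y) s t : ℝ))
    (fun s t => by exact_mod_cast abs_flipLoss_le_one _ _ s t) hparts (by positivity)
  have hn : (1 : ℝ) ≤ n := by exact_mod_cast Fin.pos x
  rw [← hcount, Fintype.card_fin, abs_le] at hsum
  rw [abs_le]
  have hlin := mul_nonneg (sub_nonneg.2 hn) (by positivity : (0 : ℝ) ≤ (c + 2) * (c + 3))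
  constructor <;> nlinarith

theorem stmt_12 (c : ℝ) (hc : 0 ≤ c) :
    ∃ C : ℝ, ∀ (n : ℕ) (P : Fin n → Fin 4),
      (∀ i : Fin 4, |((Finset.univ.filter fun v => P v = i).card : ℝ) - (n : ℝ) / 4| ≤ c) →
      ∀ x y : Fin n, x ≠ y →
        ((n : ℝ)^2 / 16 - C * n ≤
            (countP3K1 n (blowK2K2 n P) : ℝ) - (countP3K1 n (flipEdge (blowK2K2 n P) x y) : ℝ)) ∧
        (matched (P x) (P y) →
          |((countP3K1 n (blowK2K2 n P) : ℝ) - (countP3K1 n (flipEdge (blowK2K2 n P) x y) : ℝ))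
            - 3 * (n : ℝ)^2 / 16| ≤ C * n) ∧
        (P x ≠ P y → ¬ matched (P x) (P y) →
          |((countP3K1 n (blowK2K2 n P) : ℝ) - (countP3K1 n (flipEdge (blowK2K2 n P) x y) : ℝ))
            - (n : ℝ)^2 / 16| ≤ C * n) ∧
        (P x = P y →
          |((countP3K1 n (blowK2K2 n P) : ℝ) - (countP3K1 n (flipEdge (blowK2K2 n P) x y) : ℝ))
            - (n : ℝ)^2 / 8| ≤ C * n) := by
  refine ⟨8 * (c + 3) ^ 2, fun n P hP x y hxy => ?_⟩
  have h := abs_countP3K1_sub_flipEdge_sub_le hc P hP hxy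
  have hsum := congrArg (fun k : ℤ => (k : ℝ)) (sum_flipLoss (P x) (P y))
  push_cast at hsum
  rw [hsum] at h
  refine ⟨?_, fun hm => ?_, fun hne hm => ?_, fun heq => ?_⟩
  · have := (abs_le.1 h).1
    split_ifs at this <;> nlinarith [sq_nonneg (n : ℝ)]
  · rw [if_pos hm] at h; convert h using 3; ring
  · rw [if_neg hm, if_neg hne] at h; convert h using 3; ring
  · rw [if_neg (heq ▸ not_matched_self (P x)), if_pos heq] at h; convert h using 3; ring
end
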